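/- Consider the i.i.d. random environment on ℤ^d, d ≥ 2, with marginal defined as follows: let T be a random variable with 0 < T ≤ 1/2 a.s. and 𝐏[T^{−1} ≥ n] ≥ c n^{−1/2^d} for all n ≥ 1 and some c > 0, let B_0 be an independent random set uniform over the 2^d orthonormal bases {σ_1 e_1,…,σ_d e_d}, σ_i ∈ {−1,+1}, of ℤ^d, and set p^ω(0,e_i) = T/d if e_i ∈ B_0 and p^ω(0,e_i) = 1/d − T/d if e_i ∉ B_0, for all i ∈ {1,…,2d}. Then 𝐏[min_{x∈𝔥} 1/T^{(x)} ≥ n] = 𝐏[T^{−1} ≥ n]^{2^d} ≥ c' n^{−1} for the i.i.d. copies (T^{(x)})_{x∈𝔥} attached to the sites of the unit hypercube, and the annealed expected exit time of the unit hypercube is infinite: 𝔼[T^ex_𝔥] = ∞. -/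

import Mathlib

/-!
The corners of the unit cube carry independent copies of `T`, which gives the product formula
and, with the tail of `T`, the bound `c' / n`. For the exit time: with probability at least
`2^{-d 2^d} 𝐏[T ≤ 1/(m+1)]^{2^d} ≳ 1/(m+1)`, at every corner the basis `B₀` points out of the
cube and `T ≤ 1/(m+1)`. Then every step leaves the cube with probability at most `1/(m+1)`, so
the quenched probability of staying `n` steps is at least `(1 - 1/(m+1))^n` and the quenched
expected exit time is at least `m + 1`. Summing over `m`, the annealed expected exit time
dominates a multiple of the harmonic series.
-/

open MeasureTheory ProbabilityTheory Filter Topology ENNReal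
open scoped Classical

noncomputable section

namespace RWRE

/-- Sites of `ℤ^d`. -/
abbrev V (d : ℕ) := Fin d → ℤ

/-- The `2d` directions: `(i, true)` is `e_i`, `(i, false)` is `-e_i`. -/
abbrev Dir (d : ℕ) := Fin d × Bool

/-- Trajectory space. -/
abbrev Traj (d : ℕ) := ℕ → V d

/-- The unit vector associated to a direction. -/
def dirVec (d : ℕ) (e : Dir d) : V d := fun i => if i = e.1 then (if e.2 then 1 else -1) else 0

/-- Probability vectors on the set of directions. -/
abbrev ProbVec (d : ℕ) := {p : Dir d → ℝ // (∀ e, 0 ≤ p e) ∧ ∑ e, p e = 1}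

/-- Environments. -/
abbrev Env (d : ℕ) := V d → ProbVec d

/-- Transition probability at site `x` in direction `e`. -/
def pmf {d : ℕ} (ω : Env d) (x : V d) (e : Dir d) : ℝ := (ω x).1 e

/-- Transition probability from `x` to `y` (zero if `y` is not a neighbour of `x`). -/
def stepProb {d : ℕ} (ω : Env d) (x y : V d) : ℝ :=
  ∑ e : Dir d, if y = x + dirVec d e then pmf ω x e else 0

/-- `P` is the family of quenched laws: `P ω x` is the law of the Markov chain started at `x`
with transition probabilities given by `ω`. -/
def IsQuenched {d : ℕ} (P : Env d → V d → Measure (Traj d)) : Prop :=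
  (∀ ω x, IsProbabilityMeasure (P ω x)) ∧
  (∀ x, Measurable fun ω => P ω x) ∧
  ∀ ω x (n : ℕ) (γ : ℕ → V d),
    (P ω x {X | ∀ k ≤ n, X k = γ k}).toReal
      = (if γ 0 = x then 1 else 0) * ∏ k ∈ Finset.range n, stepProb ω (γ k) (γ (k + 1))

/-- The annealed law `ℙ_x`. -/
def annealed {d : ℕ} (P : Env d → V d → Measure (Traj d)) (Pr : Measure (Env d)) (x : V d) :
    Measure (Traj d) := Pr.bind fun ω => P ω x

/-- The environment law is i.i.d. -/
def IsIID {d : ℕ} (Pr : Measure (Env d)) : Prop :=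
  IsProbabilityMeasure Pr ∧
  iIndepFun (fun x ω => ω x) Pr ∧
  ∀ x : V d, Pr.map (fun ω => ω x) = Pr.map (fun ω => ω 0)

/-- Ellipticity. -/
def Elliptic {d : ℕ} (Pr : Measure (Env d)) : Prop :=
  ∀ᵐ ω ∂Pr, ∀ x e, 0 < pmf ω x e

/-- Exit time of a set. -/
def exitTime {d : ℕ} (A : Set (V d)) (X : Traj d) : ℕ∞ :=
  ⨅ (n : ℕ) (_ : X n ∉ A), (n : ℕ∞)

/-- Hitting time of a set. -/
def hitTime {d : ℕ} (A : Set (V d)) (X : Traj d) : ℕ∞ :=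
  ⨅ (n : ℕ) (_ : X n ∈ A), (n : ℕ∞)

/-- Positive hitting time of a set. -/
def retTime {d : ℕ} (A : Set (V d)) (X : Traj d) : ℕ∞ :=
  ⨅ (n : ℕ) (_ : 1 ≤ n ∧ X n ∈ A), (n : ℕ∞)

/-- Scalar product of `ℓ ∈ ℝ^d` with a site of `ℤ^d`. -/
def dot {d : ℕ} (ℓ : Fin d → ℝ) (x : V d) : ℝ := ∑ i, ℓ i * (x i : ℝ)

/-- `ℓ` belongs to the unit sphere `S^{d-1}`. -/
def UnitVec {d : ℕ} (ℓ : Fin d → ℝ) : Prop := ∑ i, ℓ i ^ 2 = 1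

/-- The walk, under the annealed law, is transient in the direction `ℓ`. -/
def Transient {d : ℕ} (P : Env d → V d → Measure (Traj d)) (Pr : Measure (Env d))
    (ℓ : Fin d → ℝ) : Prop :=
  annealed P Pr 0 {X | Tendsto (fun n => dot ℓ (X n)) atTop atTop} = 1

/-- The trajectory rescaled to `ℝ^d`. -/
def toR {d : ℕ} (x : V d) : Fin d → ℝ := fun i => (x i : ℝ)

/-- The unit hypercube based at `x`. -/
def cube {d : ℕ} (x : V d) : Set (V d) := {y | ∀ i, y i = x i ∨ y i = x i + 1}

/-- The corners of the unit hypercube based at `0`, as a finite set. -/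
def cubePts (d : ℕ) : Finset (V d) :=
  Finset.univ.image fun s : Fin d → Bool => (fun i => if s i then 1 else 0 : V d)

/-- The (outer) boundary of a set of sites. -/
def bdry {d : ℕ} (A : Set (V d)) : Set (V d) :=
  {z | z ∉ A ∧ ∃ w ∈ A, ∑ i, |z i - w i| = 1}

/-- The boundary points adjacent to `y`. -/
def bdryAt {d : ℕ} (y : V d) (A : Set (V d)) : Set (V d) :=
  {z | z ∈ bdry A ∧ ∑ i, |z i - y i| = 1}

/-- `Q^C_y`: the largest transition probability leading out of `C` from `y`. -/
def Qmax {d : ℕ} (ω : Env d) (C : Set (V d)) (y : V d) : ℝ :=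
  ⨆ e : Dir d, if y + dirVec d e ∈ bdryAt y C then pmf ω y e else 0

/-- The event that the walk exits `C` through a neighbour of `y` before returning to `x`. -/
def exitVia {d : ℕ} (C : Set (V d)) (x y : V d) : Set (Traj d) :=
  {X | ∃ n : ℕ, X n ∈ bdryAt y C ∧ (∀ m < n, X m ∉ bdry C) ∧ ∀ m, 1 ≤ m → m < n → X m ≠ x}

/-- `Q̃^C_{x,y}`: the quenched probability, starting from `x`, of exiting `C` through a
neighbour of `y` before returning to `x`. -/
def Qtilde {d : ℕ} (P : Env d → V d → Measure (Traj d)) (ω : Env d) (C : Set (V d))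
    (x y : V d) : ℝ := ((P ω x) (exitVia C x y)).toReal

/-- A marked Markovian hypercube: a unit hypercube containing `0` discovered in a Markovian
fashion by revealing sites `f 0 = 0, f 1, ...` one at a time, together with marks. -/
structure MMH (d : ℕ) where
  /-- The successively revealed sites. -/
  f : ℕ → Env d → V d
  /-- The marks, indexed by the corners of the unit hypercube at `0`. -/
  mark : V d → Env d → ℝ
  /-- The base point `x₀(ω)` of the revealed hypercube. -/
  x0 : Env d → V d
  f_zero : ∀ ω, f 0 ω = 0
  f_meas : ∀ i, Measurable (f i)
  f_local : ∀ i (ω ω' : Env d), (∀ j ≤ i, ω' (f j ω) = ω (f j ω)) → f (i + 1) ω' = f (i + 1) ω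
  f_adj : ∀ i ω, i + 1 < 2 ^ d → f (i + 1) ω ∈ bdry {y | ∃ j ≤ i, f j ω = y}
  x0_cube : ∀ ω, cube (x0 ω) = {y | ∃ j < 2 ^ d, f j ω = y}
  mark_nonneg : ∀ x ω, 0 ≤ mark x ω
  mark_meas : ∀ x, Measurable (mark x)
  mark_local : ∀ x (ω ω' : Env d), (∀ y ∈ cube (x0 ω), ω' y = ω y) → mark x ω' = mark x ω

/-- Condition `(K)_α` with explicit constant `ε` (parts (1), (2), (3)). -/
def CondKE {d : ℕ} (P : Env d → V d → Measure (Traj d)) (Pr : Measure (Env d))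
    (α ε : ℝ) : Prop :=
  ∃ γ : V d → ℝ, (∀ x, 0 ≤ γ x) ∧
    (∀ x ∈ cubePts d, ∫⁻ ω, (ENNReal.ofReal (Qmax ω (cube 0) x)) ^ (-(γ x)) ∂Pr < ⊤) ∧
    ∃ H : MMH d,
      (∫⁻ ω, ∏ x ∈ cubePts d,
          (ENNReal.ofReal (Qtilde P ω (cube (H.x0 ω)) 0 (H.x0 ω + x))) ^ (-(H.mark x ω)) ∂Pr
        < ⊤) ∧
      ∀ᵐ ω ∂Pr, α + ε ≤ ∑ x ∈ cubePts d, min (γ x) (H.mark x ω)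

/-- Condition `(K)_α`. -/
def CondK {d : ℕ} (P : Env d → V d → Measure (Traj d)) (Pr : Measure (Env d)) (α : ℝ) : Prop :=
  ∃ ε > (0 : ℝ), CondKE P Pr α ε

/-- Condition `(E)_0`. -/
def CondE0 {d : ℕ} (Pr : Measure (Env d)) : Prop :=
  ∀ e : Dir d, ∃ η > (0 : ℝ), ∫⁻ ω, (ENNReal.ofReal (pmf ω 0 e)) ^ (-η) ∂Pr < ⊤

/-- The coordinates of `z ∈ ℤ^d` in the rotated frame `R`. -/
def tiltCoord {d : ℕ} (R : EuclideanSpace ℝ (Fin d) ≃ₗᵢ[ℝ] EuclideanSpace ℝ (Fin d))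
    (z : V d) : Fin d → ℝ :=
  WithLp.equiv 2 (Fin d → ℝ) (R.symm ((WithLp.equiv 2 (Fin d → ℝ)).symm fun j => (z j : ℝ)))

/-- The box `B^ℓ_{L,L',L̃}`: the image under the rotation `R` of
`(-L',L) × (-L̃,L̃)^{d-1}`, intersected with `ℤ^d`. -/
def polyBox {d : ℕ} (R : EuclideanSpace ℝ (Fin d) ≃ₗᵢ[ℝ] EuclideanSpace ℝ (Fin d))
    (L L' Lt : ℝ) : Set (V d) :=
  {z | (∀ i : Fin d, (i : ℕ) = 0 → tiltCoord R z i ∈ Set.Ioo (-L') L) ∧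
       ∀ i : Fin d, (i : ℕ) ≠ 0 → tiltCoord R z i ∈ Set.Ioo (-Lt) Lt}

/-- The first coordinate vector of `ℝ^d` as an element of Euclidean space. -/
def euc1 (d : ℕ) : EuclideanSpace ℝ (Fin d) :=
  (WithLp.equiv 2 (Fin d → ℝ)).symm fun i => if (i : ℕ) = 0 then 1 else 0

/-- The polynomial condition `(P)^ℓ_M`. -/
def CondP {d : ℕ} (P : Env d → V d → Measure (Traj d)) (Pr : Measure (Env d))
    (ℓ : Fin d → ℝ) (M : ℝ) : Prop :=
  ∃ R : EuclideanSpace ℝ (Fin d) ≃ₗᵢ[ℝ] EuclideanSpace ℝ (Fin d),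
    R (euc1 d) = (WithLp.equiv 2 (Fin d → ℝ)).symm ℓ ∧
    ∀ L : ℝ, 2 / 3 * 3 ^ (29 * d) ≤ L →
      ∃ L' ≤ 5 / 4 * L, ∃ Lt ≤ 72 * L ^ 3,
        annealed P Pr 0
          {X | ∃ n, X n ∉ polyBox R L L' Lt ∧ (∀ m < n, X m ∈ polyBox R L L' Lt) ∧
                dot ℓ (X n) < L}
          ≤ ENNReal.ofReal (L ^ (-M))

/-- The backtracking time `D = inf{n ≥ 0 : X_n·ℓ < X_0·ℓ}`. -/
def Dtime {d : ℕ} (ℓ : Fin d → ℝ) (X : Traj d) : ℕ∞ :=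
  ⨅ (n : ℕ) (_ : dot ℓ (X n) < dot ℓ (X 0)), (n : ℕ∞)

/-- The triples `(S_k, R_k, M_k)` of the regeneration structure. -/
def regenAux {d : ℕ} (ℓ : Fin d → ℝ) (a : ℝ) (X : Traj d) : ℕ → ℕ∞ × ℕ∞ × EReal
  | 0 => (0, 0, ((dot ℓ (X 0) : ℝ) : EReal))
  | k + 1 =>
    let M := (regenAux ℓ a X k).2.2
    let S : ℕ∞ := ⨅ (n : ℕ) (_ : M + (a : EReal) < ((dot ℓ (X n) : ℝ) : EReal)), (n : ℕ∞)
    let R : ℕ∞ := ⨅ (n : ℕ) (_ : (n : ℕ∞) = S), (S + Dtime ℓ fun m => X (n + m))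
    (S, R, ⨆ (n : ℕ) (_ : (n : ℕ∞) ≤ R), ((dot ℓ (X n) : ℝ) : EReal))

/-- The first regeneration time `τ₁ = S_K`. -/
def tau1 {d : ℕ} (ℓ : Fin d → ℝ) (a : ℝ) (X : Traj d) : ℕ∞ :=
  ⨅ (k : ℕ) (_ : 1 ≤ k ∧ (regenAux ℓ a X k).1 ≠ ⊤ ∧ (regenAux ℓ a X k).2.1 = ⊤),
    (regenAux ℓ a X k).1

/-- The `ℓ¹` norm on `ℤ^d`. -/
def norm1 {d : ℕ} (x : V d) : ℤ := ∑ i, |x i|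

/-- `ℙ`-expectation, under the annealed law started at `x`, of `(T^ex_𝔥)^α`. -/
def cubeExitMoment {d : ℕ} (P : Env d → V d → Measure (Traj d)) (Pr : Measure (Env d))
    (x : V d) (α : ℝ) : ℝ≥0∞ :=
  ∫⁻ X, ((exitTime (cube 0) X : ℝ≥0∞)) ^ α ∂(annealed P Pr x)

/-- The uniform probability measure on sign patterns (i.e. on the `2^d` orthonormal bases
`{σ₁e₁, …, σ_d e_d}` of `ℤ^d`). -/
def uniformSigns (d : ℕ) : Measure (Fin d → Bool) :=
  ((2 ^ d : ℝ≥0∞))⁻¹ • ∑ σ : Fin d → Bool, Measure.dirac σ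

/-- The transition vector of the symmetric example environment as a function of `(T, B₀)`:
direction `e` gets probability `T/d` if `e ∈ B₀` and `1/d - T/d` otherwise. -/
def psym (d : ℕ) (ts : ℝ × (Fin d → Bool)) : Dir d → ℝ := fun e =>
  if e.2 = ts.2 e.1 then ts.1 / d else 1 / d - ts.1 / d

/-- The law `Pr` is the i.i.d. environment whose common site marginal is the law of
`psym (T, B₀)`, where `0 < T ≤ 1/2` a.s., `𝐏[T⁻¹ ≥ n] ≥ c n^{-1/2^d}`, and `B₀` is an
independent uniform sign pattern. -/
def IsPsym {d : ℕ} (Pr : Measure (Env d)) : Prop :=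
  IsIID Pr ∧
  ∃ μT : Measure ℝ, IsProbabilityMeasure μT ∧
    μT {t | 0 < t ∧ t ≤ 1 / 2} = 1 ∧
    (∃ c > (0 : ℝ), ∀ n : ℕ, 1 ≤ n →
      ENNReal.ofReal (c * (n : ℝ) ^ (-(1 : ℝ) / 2 ^ d)) ≤ μT {t | (n : ℝ) ≤ t⁻¹}) ∧
    Pr.map (fun ω => ((ω 0).1 : Dir d → ℝ))
      = (μT.prod (uniformSigns d)).map (fun ts => psym d ts)

/-- The value of the variable `T` at the site `x`, recovered from the environment:
`T^{(x)} = d · min_e p^ω(x,e)`. -/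
def Tval {d : ℕ} (ω : Env d) (x : V d) : ℝ := d * ⨅ e : Dir d, pmf ω x e

section Lattice

variable {d : ℕ}

lemma dirVec_injective : Function.Injective (dirVec d) := by
  rintro ⟨i, b⟩ ⟨j, c⟩ h
  have hi := congrFun h i
  simp only [dirVec] at hi
  by_cases hij : i = j
  · subst hij; cases b <;> cases c <;> simp_all
  · rw [if_neg hij] at hi
    cases b <;> simp_all

lemma mem_cube_zero {y : V d} : y ∈ cube (0 : V d) ↔ ∀ i, y i = 0 ∨ y i = 1 := by
  simp [cube]

lemma coe_cubePts : (cubePts d : Set (V d)) = cube 0 := by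
  ext y
  simp only [cubePts, Finset.coe_image, Finset.coe_univ, Set.image_univ, Set.mem_range,
    mem_cube_zero]
  constructor
  · rintro ⟨s, rfl⟩ i
    by_cases h : s i <;> simp [h]
  · intro h
    refine ⟨fun i => decide (y i = 1), funext fun i => ?_⟩
    rcases h i with h | h <;> simp [h]

lemma card_cubePts : (cubePts d).card = 2 ^ d := by
  rw [cubePts, Finset.card_image_of_injective, Finset.card_univ, Fintype.card_fun,
    Fintype.card_bool, Fintype.card_fin]
  intro s t h
  funext i
  have := congrFun h i
  cases hs : s i <;> cases ht : t i <;> simp_all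

lemma measurableSet_sites (s : Set (V d)) : MeasurableSet s :=
  s.to_countable.measurableSet

end Lattice

section Paths

variable {d : ℕ}

def pathFrom (x : V d) {n : ℕ} (es : Fin n → Dir d) (k : ℕ) : V d :=
  x + ∑ j : Fin n with j.val < k, dirVec d (es j)

lemma pathFrom_zero (x : V d) {n : ℕ} (es : Fin n → Dir d) : pathFrom x es 0 = x := by
  simp [pathFrom]

lemma pathFrom_succ (x : V d) {n : ℕ} (es : Fin n → Dir d) (k : Fin n) :
    pathFrom x es (k + 1) = pathFrom x es k + dirVec d (es k) := by
  have hfilter : Finset.univ.filter (fun j : Fin n => j.val < k + 1)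
      = insert k (Finset.univ.filter fun j : Fin n => j.val < k) := by
    ext j
    simp only [Finset.mem_filter, Finset.mem_univ, true_and, Finset.mem_insert, Fin.ext_iff]
    omega
  rw [pathFrom, pathFrom, hfilter, Finset.sum_insert (by simp)]
  abel

lemma pathFrom_cons (x : V d) {n : ℕ} (e : Dir d) (es : Fin n → Dir d) (k : ℕ) :
    pathFrom x (Fin.cons e es) (k + 1) = pathFrom (x + dirVec d e) es k := by
  have hsum : ∑ j : Fin (n + 1) with j.val < k + 1, dirVec d ((Fin.cons e es : _ → Dir d) j)
      = dirVec d e + ∑ j : Fin n with j.val < k, dirVec d (es j) := by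
    rw [Finset.sum_filter, Fin.sum_univ_succ, Finset.sum_filter]
    simp [Fin.cons_succ]
  rw [pathFrom, pathFrom, hsum]
  abel

def pathWeight (ω : Env d) (x : V d) {n : ℕ} (es : Fin n → Dir d) : ℝ :=
  ∏ k : Fin n, pmf ω (pathFrom x es k) (es k)

lemma pmf_nonneg (ω : Env d) (x : V d) (e : Dir d) : 0 ≤ pmf ω x e := (ω x).2.1 e

lemma pathWeight_nonneg (ω : Env d) (x : V d) {n : ℕ} (es : Fin n → Dir d) :
    0 ≤ pathWeight ω x es :=
  Finset.prod_nonneg fun _ _ => pmf_nonneg _ _ _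

lemma pathWeight_cons (ω : Env d) (x : V d) {n : ℕ} (e : Dir d) (es : Fin n → Dir d) :
    pathWeight ω x (Fin.cons e es) = pmf ω x e * pathWeight ω (x + dirVec d e) es := by
  rw [pathWeight, Fin.prod_univ_succ, Fin.cons_zero, Fin.val_zero, pathFrom_zero]
  congr 1
  refine Finset.prod_congr rfl fun k _ => ?_
  rw [Fin.cons_succ, Fin.val_succ, pathFrom_cons]

def cylinder (x : V d) {n : ℕ} (es : Fin n → Dir d) : Set (Traj d) :=
  {X | ∀ k ≤ n, X k = pathFrom x es k}

lemma measurableSet_cylinder (x : V d) {n : ℕ} (es : Fin n → Dir d) :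
    MeasurableSet (cylinder x es) := by
  have : cylinder x es = ⋂ k ∈ Set.Iic n, (fun X : Traj d => X k) ⁻¹' {pathFrom x es k} := by
    ext X; simp [cylinder]
  rw [this]
  exact .biInter (Set.to_countable _) fun k _ => measurable_pi_apply k (measurableSet_sites _)

lemma pairwiseDisjoint_cylinder (x : V d) (n : ℕ) :
    (Set.univ : Set (Fin n → Dir d)).PairwiseDisjoint (cylinder x) := by
  intro es _ es' _ hne
  refine Set.disjoint_left.mpr fun X hX hX' => hne (funext fun j => dirVec_injective ?_)
  have hstep : ∀ {fs : Fin n → Dir d}, X ∈ cylinder x fs → X (j + 1) = X j + dirVec d (fs j) :=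
    fun {fs} h => by rw [h _ j.isLt, h _ j.isLt.le, pathFrom_succ]
  exact add_left_cancel ((hstep hX).symm.trans (hstep hX'))

lemma stepProb_add_dirVec (ω : Env d) (y : V d) (e : Dir d) :
    stepProb ω y (y + dirVec d e) = pmf ω y e := by
  rw [stepProb, Finset.sum_eq_single e (fun e' _ hne => if_neg fun h =>
    hne (dirVec_injective (add_left_cancel h)).symm) (by simp), if_pos rfl]

lemma IsQuenched.measure_cylinder {P : Env d → V d → Measure (Traj d)} (hP : IsQuenched P)
    (ω : Env d) (x : V d) {n : ℕ} (es : Fin n → Dir d) :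
    P ω x (cylinder x es) = ENNReal.ofReal (pathWeight ω x es) := by
  have := hP.1 ω x
  have hprod : ∏ k ∈ Finset.range n, stepProb ω (pathFrom x es k) (pathFrom x es (k + 1))
      = pathWeight ω x es := by
    rw [← Fin.prod_univ_eq_prod_range (fun k => stepProb ω (pathFrom x es k) _), pathWeight]
    exact Finset.prod_congr rfl fun k _ => by rw [pathFrom_succ x es k, stepProb_add_dirVec]
  have hform := hP.2.2 ω x n (pathFrom x es)
  rw [if_pos (pathFrom_zero x es), one_mul, hprod] at hform
  rw [← ENNReal.ofReal_toReal (measure_ne_top (P ω x) _), cylinder, hform]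

end Paths

section Staying

variable {d : ℕ}

def stays (A : Set (V d)) (n : ℕ) : Set (Traj d) := {X | ∀ k ≤ n, X k ∈ A}

lemma measurableSet_stays (A : Set (V d)) (n : ℕ) : MeasurableSet (stays A n) := by
  have : stays A n = ⋂ k ∈ Set.Iic n, (fun X : Traj d => X k) ⁻¹' A := by
    ext X; simp [stays]
  rw [this]
  exact .biInter (Set.to_countable _) fun k _ => measurable_pi_apply k (measurableSet_sites _)

def innerDirs (A : Set (V d)) (x : V d) : Finset (Dir d) :=
  Finset.univ.filter fun e => x + dirVec d e ∈ A

def PathStaysIn (A : Set (V d)) (x : V d) {n : ℕ} (es : Fin n → Dir d) : Prop :=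
  ∀ k ≤ n, pathFrom x es k ∈ A

lemma pathStaysIn_cons {A : Set (V d)} {x : V d} {n : ℕ} {e : Dir d} {es : Fin n → Dir d} :
    PathStaysIn A x (Fin.cons e es) ↔ x ∈ A ∧ PathStaysIn A (x + dirVec d e) es := by
  constructor
  · intro h
    refine ⟨by simpa [pathFrom_zero] using h 0 (Nat.zero_le _), fun k hk => ?_⟩
    simpa [pathFrom_cons] using h (k + 1) (by omega)
  · rintro ⟨hx, h⟩ (_ | k) hk
    · rwa [pathFrom_zero]
    · rw [pathFrom_cons]; exact h k (by omega)

lemma sum_pathWeight_succ (ω : Env d) {A : Set (V d)} {x : V d} (hx : x ∈ A) (n : ℕ) :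
    ∑ es : Fin (n + 1) → Dir d with PathStaysIn A x es, pathWeight ω x es
      = ∑ e ∈ innerDirs A x, pmf ω x e *
          ∑ es : Fin n → Dir d with PathStaysIn A (x + dirVec d e) es,
            pathWeight ω (x + dirVec d e) es := by
  rw [Finset.sum_filter, ← (Fin.consEquiv fun _ => Dir d).sum_comp, Fintype.sum_prod_type,
    innerDirs, Finset.sum_filter]
  refine Finset.sum_congr rfl fun e _ => ?_
  simp only [Fin.consEquiv, Equiv.coe_fn_mk, pathStaysIn_cons, pathWeight_cons, hx, true_and]
  split_ifs with he
  · rw [Finset.sum_filter, Finset.mul_sum]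
    exact Finset.sum_congr rfl fun es _ => by split_ifs <;> simp
  · refine Finset.sum_eq_zero fun es _ => if_neg fun h => he ?_
    simpa [pathFrom_zero] using h 0 (Nat.zero_le _)

lemma pow_le_sum_pathWeight (ω : Env d) {A : Set (V d)} {r : ℝ} (hr0 : 0 ≤ r)
    (hr : ∀ y ∈ A, r ≤ ∑ e ∈ innerDirs A y, pmf ω y e) (n : ℕ) {x : V d} (hx : x ∈ A) :
    r ^ n ≤ ∑ es : Fin n → Dir d with PathStaysIn A x es, pathWeight ω x es := by
  induction n generalizing x with
  | zero =>
    have hall : ∀ es : Fin 0 → Dir d, PathStaysIn A x es := fun es k hk => by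
      rw [Nat.le_zero.mp hk, pathFrom_zero]; exact hx
    simp [Finset.filter_true_of_mem fun es _ => hall es, pathWeight]
  | succ n ih =>
    rw [sum_pathWeight_succ ω hx]
    calc r ^ (n + 1) ≤ (∑ e ∈ innerDirs A x, pmf ω x e) * r ^ n := by
          rw [pow_succ']; exact mul_le_mul_of_nonneg_right (hr x hx) (pow_nonneg hr0 n)
      _ ≤ _ := by
          rw [Finset.sum_mul]
          refine Finset.sum_le_sum fun e he => mul_le_mul_of_nonneg_left ?_ (pmf_nonneg ω x e)
          exact ih (Finset.mem_filter.mp he).2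

lemma IsQuenched.ofReal_pow_le_measure_stays {P : Env d → V d → Measure (Traj d)}
    (hP : IsQuenched P) (ω : Env d) {A : Set (V d)} {r : ℝ} (hr0 : 0 ≤ r)
    (hr : ∀ y ∈ A, r ≤ ∑ e ∈ innerDirs A y, pmf ω y e) (n : ℕ) {x : V d} (hx : x ∈ A) :
    ENNReal.ofReal (r ^ n) ≤ P ω x (stays A n) := by
  calc ENNReal.ofReal (r ^ n)
      ≤ ∑ es : Fin n → Dir d with PathStaysIn A x es, ENNReal.ofReal (pathWeight ω x es) := by
        rw [← ENNReal.ofReal_sum_of_nonneg fun es _ => pathWeight_nonneg ω x es]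
        exact ENNReal.ofReal_le_ofReal (pow_le_sum_pathWeight ω hr0 hr n hx)
    _ = P ω x (⋃ es ∈ Finset.univ.filter (PathStaysIn A x), cylinder x es) := by
        rw [measure_biUnion_finset ((pairwiseDisjoint_cylinder x n).subset (Set.subset_univ _))
          fun es _ => measurableSet_cylinder x es]
        exact Finset.sum_congr rfl fun es _ => (hP.measure_cylinder ω x es).symm
    _ ≤ P ω x (stays A n) := by
        refine measure_mono fun X hX => ?_
        simp only [Set.mem_iUnion, Finset.mem_filter] at hX
        obtain ⟨es, ⟨-, hes⟩, hXes⟩ := hX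
        exact fun k hk => hXes k hk ▸ hes k hk

lemma IsQuenched.inv_le_tsum_measure_stays {P : Env d → V d → Measure (Traj d)}
    (hP : IsQuenched P) (ω : Env d) {A : Set (V d)} {q : ℝ} (hq0 : 0 ≤ q) (hq : q ≤ 1)
    (hleak : ∀ y ∈ A, 1 - q ≤ ∑ e ∈ innerDirs A y, pmf ω y e) {x : V d} (hx : x ∈ A) :
    (ENNReal.ofReal q)⁻¹ ≤ ∑' n, P ω x (stays A n) := by
  have hq' : ENNReal.ofReal q ≤ 1 := ENNReal.ofReal_le_one.mpr hq
  calc (ENNReal.ofReal q)⁻¹ = (1 - ENNReal.ofReal (1 - q))⁻¹ := by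
        rw [ENNReal.ofReal_sub _ hq0, ENNReal.ofReal_one,
          ENNReal.sub_sub_cancel ENNReal.one_ne_top hq']
    _ = ∑' n, ENNReal.ofReal ((1 - q) ^ n) := by
        rw [← ENNReal.tsum_geometric]
        exact tsum_congr fun n => (ENNReal.ofReal_pow (by linarith) n).symm
    _ ≤ _ := ENNReal.tsum_le_tsum fun n =>
        hP.ofReal_pow_le_measure_stays ω (by linarith) hleak n hx

end Staying

section ExitTime

variable {d : ℕ}

/-- Among `0, …, N - 1`, at most `m + 1 ≤ g` satisfy `p`, where `m` is the largest one. -/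
lemma tsum_ite_one_le_of_succ_le {p : ℕ → Prop} {g : ℝ≥0∞}
    (h : ∀ n, p n → (n : ℝ≥0∞) + 1 ≤ g) :
    ∑' n, (if p n then (1 : ℝ≥0∞) else 0) ≤ g := by
  have hpartial : ∀ N, ∑ n ∈ Finset.range N, (if p n then (1 : ℝ≥0∞) else 0) ≤ g := by
    intro N
    induction N with
    | zero => simp
    | succ N ih =>
      by_cases hN : p N
      · calc ∑ n ∈ Finset.range (N + 1), (if p n then (1 : ℝ≥0∞) else 0)
            ≤ ∑ _n ∈ Finset.range (N + 1), 1 := Finset.sum_le_sum fun _ _ => by split <;> simp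
          _ = (N : ℝ≥0∞) + 1 := by simp
          _ ≤ g := h N hN
      · rwa [Finset.sum_range_succ, if_neg hN, add_zero]
  rw [ENNReal.tsum_eq_iSup_nat]
  exact iSup_le hpartial

lemma tsum_measure_stays_le_lintegral_exitTime (μ : Measure (Traj d)) (A : Set (V d)) :
    ∑' n, μ (stays A n) ≤ ∫⁻ X, (exitTime A X : ℝ≥0∞) ∂μ := by
  calc ∑' n, μ (stays A n) = ∫⁻ X, ∑' n, (stays A n).indicator 1 X ∂μ := by
        rw [lintegral_tsum fun n =>
          (measurable_one.indicator (measurableSet_stays A n)).aemeasurable]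
        exact tsum_congr fun n => (lintegral_indicator_one (measurableSet_stays A n)).symm
    _ ≤ ∫⁻ X, (exitTime A X : ℝ≥0∞) ∂μ := by
        refine lintegral_mono fun X => ?_
        simp only [Set.indicator_apply, Pi.one_apply]
        refine tsum_ite_one_le_of_succ_le fun n hn => ?_
        have hexit : (n : ℕ∞) + 1 ≤ exitTime A X :=
          le_iInf₂ fun m hm => by
            exact_mod_cast Nat.succ_le_of_lt (lt_of_not_ge fun hmn => hm (hn m hmn))
        exact_mod_cast ENat.toENNReal_le.mpr hexit

lemma annealed_apply {P : Env d → V d → Measure (Traj d)} (hP : IsQuenched P)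
    (Pr : Measure (Env d)) (x : V d) {s : Set (Traj d)} (hs : MeasurableSet s) :
    annealed P Pr x s = ∫⁻ ω, P ω x s ∂Pr :=
  Measure.bind_apply hs (hP.2.1 x).aemeasurable

lemma tsum_measure_le_lintegral_exitTime {P : Env d → V d → Measure (Traj d)}
    (hP : IsQuenched P) (Pr : Measure (Env d)) {A : Set (V d)} (x : V d)
    {L : ℕ → Set (Env d)} (hL : ∀ m, MeasurableSet (L m))
    (hLstay : ∀ m, ∀ ω ∈ L m, (m : ℝ≥0∞) + 1 ≤ ∑' n, P ω x (stays A n)) :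
    ∑' m, Pr (L m) ≤ ∫⁻ X, (exitTime A X : ℝ≥0∞) ∂(annealed P Pr x) := by
  have hPstays : ∀ n, Measurable fun ω => P ω x (stays A n) :=
    fun n => (Measure.measurable_coe (measurableSet_stays A n)).comp (hP.2.1 x)
  calc ∑' m, Pr (L m) = ∫⁻ ω, ∑' m, (L m).indicator 1 ω ∂Pr := by
        rw [lintegral_tsum fun m => (measurable_one.indicator (hL m)).aemeasurable]
        exact tsum_congr fun m => (lintegral_indicator_one (hL m)).symm
    _ ≤ ∫⁻ ω, ∑' n, P ω x (stays A n) ∂Pr := by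
        refine lintegral_mono fun ω => ?_
        simp only [Set.indicator_apply, Pi.one_apply]
        exact tsum_ite_one_le_of_succ_le fun m hm => hLstay m ω hm
    _ = ∑' n, annealed P Pr x (stays A n) := by
        rw [lintegral_tsum fun n => (hPstays n).aemeasurable]
        exact tsum_congr fun n => (annealed_apply hP Pr x (measurableSet_stays A n)).symm
    _ ≤ _ := tsum_measure_stays_le_lintegral_exitTime _ A

end ExitTime

section IID

variable {d : ℕ} {Pr : Measure (Env d)}

lemma IsIID.measure_eval_preimage (hPr : IsIID Pr) (x : V d) {B : Set (ProbVec d)}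
    (hB : MeasurableSet B) :
    Pr ((fun ω : Env d => ω x) ⁻¹' B) = Pr ((fun ω : Env d => ω 0) ⁻¹' B) := by
  rw [← Measure.map_apply (measurable_pi_apply x) hB, hPr.2.2 x,
    Measure.map_apply (measurable_pi_apply 0) hB]

lemma IsIID.measure_biInter_eval_preimage (hPr : IsIID Pr) (s : Finset (V d))
    {B : V d → Set (ProbVec d)} (hB : ∀ x, MeasurableSet (B x)) :
    Pr (⋂ x ∈ s, (fun ω : Env d => ω x) ⁻¹' B x)
      = ∏ x ∈ s, Pr ((fun ω : Env d => ω 0) ⁻¹' B x) := by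
  rw [iIndepFun_iff_measure_inter_preimage_eq_mul.mp hPr.2.1 s fun x _ => hB x]
  exact Finset.prod_congr rfl fun x _ => hPr.measure_eval_preimage x (hB x)

end IID

section Psym

variable {d : ℕ}

lemma uniformSigns_apply (s : Set (Fin d → Bool)) :
    uniformSigns d s = (2 ^ d : ℝ≥0∞)⁻¹ * ∑ σ : Fin d → Bool, s.indicator 1 σ := by
  simp only [uniformSigns, Measure.smul_apply, smul_eq_mul, Measure.finsetSum_apply,
    Measure.dirac_apply]

lemma uniformSigns_singleton (σ : Fin d → Bool) : uniformSigns d {σ} = (2 ^ d : ℝ≥0∞)⁻¹ := by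
  rw [uniformSigns_apply, Finset.sum_eq_single σ (fun τ _ hne => by simp [hne]) (by simp)]
  simp

instance : IsProbabilityMeasure (uniformSigns d) := by
  refine ⟨?_⟩
  rw [uniformSigns_apply]
  simp only [Set.indicator_univ, Pi.one_apply, Finset.sum_const, Finset.card_univ,
    Fintype.card_fun, Fintype.card_bool, Fintype.card_fin, nsmul_eq_mul, mul_one, Nat.cast_pow,
    Nat.cast_ofNat]
  exact ENNReal.inv_mul_cancel (by positivity) (ENNReal.pow_ne_top ENNReal.ofNat_ne_top)

lemma measurable_psym : Measurable (psym d) := by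
  refine measurable_pi_iff.mpr fun e => Measurable.ite ?_ ?_ ?_
  · exact (measurable_pi_apply e.1).comp measurable_snd (Set.to_countable _).measurableSet
  · exact measurable_fst.div_const _
  · exact measurable_const.sub (measurable_fst.div_const _)

lemma iInf_psym (hd : 0 < d) {t : ℝ} (ht : t ≤ 1 / 2) (σ : Fin d → Bool) :
    ⨅ e, psym d (t, σ) e = t / d := by
  have : Nonempty (Dir d) := ⟨(⟨0, hd⟩, true)⟩
  have hmem : psym d (t, σ) (⟨0, hd⟩, σ ⟨0, hd⟩) = t / d := by simp [psym]
  refine le_antisymm (hmem ▸ ciInf_le (Set.finite_range _).bddBelow _) (le_ciInf fun e => ?_)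
  rw [psym]
  split
  · exact le_rfl
  · rw [← sub_div]
    gcongr
    linarith

/-- The sign pattern whose basis `B₀` points out of the unit cube at the corner `x`. -/
def outwardSigns (x : V d) : Fin d → Bool := fun i => !decide (x i = 0)

lemma innerDirs_cube_zero {x : V d} (hx : x ∈ cube (0 : V d)) :
    innerDirs (cube 0) x = Finset.univ.image fun i => ((i, decide (x i = 0)) : Dir d) := by
  ext ⟨i, b⟩
  simp only [innerDirs, Finset.mem_filter, Finset.mem_univ, true_and, Finset.mem_image,
    Prod.mk.injEq, exists_eq_left, mem_cube_zero]
  rw [mem_cube_zero] at hx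
  constructor
  · intro h
    have hi := h i
    have hxi := hx i
    cases b <;> simp [dirVec] at hi ⊢ <;> omega
  · rintro rfl j
    have := hx j
    by_cases hji : j = i
    · subst hji
      by_cases h0 : x j = 0 <;> simp_all [dirVec]
    · simpa [dirVec, hji] using this

lemma sum_innerDirs_psym_outwardSigns (hd : 0 < d) {x : V d} (hx : x ∈ cube (0 : V d)) (t : ℝ) :
    ∑ e ∈ innerDirs (cube 0) x, psym d (t, outwardSigns x) e = 1 - t := by
  rw [innerDirs_cube_zero hx, Finset.sum_image fun i _ j _ h => congrArg Prod.fst h]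
  simp only [psym, outwardSigns, Bool.eq_not_self, if_false, Finset.sum_const, Finset.card_univ,
    Fintype.card_fin, nsmul_eq_mul]
  field_simp

end Psym

section SymmetricExample

variable {d : ℕ} {Pr : Measure (Env d)}

lemma tsum_ofReal_mul_inv_succ_eq_top {a : ℝ} (ha : 0 < a) :
    ∑' m : ℕ, ENNReal.ofReal (a * ((m : ℝ) + 1)⁻¹) = ⊤ := by
  by_contra hfin
  have hsum : Summable fun m : ℕ => a * ((m : ℝ) + 1)⁻¹ :=
    (ENNReal.summable_toReal hfin).congr fun m => ENNReal.toReal_ofReal (by positivity)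
  have hharm : Summable fun m : ℕ => 1 / ((m + 1 : ℕ) : ℝ) :=
    (hsum.mul_left a⁻¹).congr fun m => by push_cast; field_simp
  exact Real.not_summable_one_div_natCast ((summable_nat_add_iff 1).mp hharm)

lemma mul_rpow_neg_inv_two_pow_pow (c : ℝ) {n : ℝ} (hn : 0 ≤ n) :
    (c * n ^ (-(1 : ℝ) / 2 ^ d)) ^ (2 ^ d) = c ^ (2 ^ d) * n⁻¹ := by
  have hexp : -(1 : ℝ) / 2 ^ d * ((2 ^ d : ℕ) : ℝ) = -1 := by
    push_cast
    field_simp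
  rw [mul_pow, ← Real.rpow_natCast (n ^ _), ← Real.rpow_mul hn, hexp, Real.rpow_neg_one]

lemma setOf_forall_cube_eq_biInter (p : V d → (Dir d → ℝ) → Prop) :
    {ω : Env d | ∀ x ∈ cube (0 : V d), p x (ω x).1}
      = ⋂ x ∈ cubePts d, (fun ω : Env d => ω x) ⁻¹' (Subtype.val ⁻¹' {v | p x v}) := by
  ext ω
  simp [← coe_cubePts]

def tailSet (d : ℕ) (n : ℕ) : Set (Dir d → ℝ) := {v | (n : ℝ) ≤ ((d : ℝ) * ⨅ e, v e)⁻¹}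

lemma measurableSet_tailSet (n : ℕ) : MeasurableSet (tailSet d n) :=
  (measurable_const.mul (Measurable.iInf fun e => measurable_pi_apply e)).inv measurableSet_Ici

lemma IsIID.measure_cube_tail_eq_pow (hPr : IsIID Pr) (n : ℕ) :
    Pr {ω | ∀ x ∈ cube (0 : V d), (n : ℝ) ≤ (Tval ω x)⁻¹}
      = Pr {ω | (n : ℝ) ≤ (Tval ω 0)⁻¹} ^ (2 ^ d) := by
  calc Pr {ω | ∀ x ∈ cube (0 : V d), (n : ℝ) ≤ (Tval ω x)⁻¹}
      = Pr (⋂ x ∈ cubePts d, (fun ω : Env d => ω x) ⁻¹' (Subtype.val ⁻¹' tailSet d n)) :=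
        congrArg Pr (setOf_forall_cube_eq_biInter fun _ v => (n : ℝ) ≤ ((d : ℝ) * ⨅ e, v e)⁻¹)
    _ = ∏ _x ∈ cubePts d, Pr {ω | (n : ℝ) ≤ (Tval ω 0)⁻¹} :=
        hPr.measure_biInter_eval_preimage _ fun _ =>
          measurable_subtype_coe (measurableSet_tailSet n)
    _ = _ := by rw [Finset.prod_const, card_cubePts]

lemma IsPsym.exists_tail_bound (hPr : IsPsym Pr) :
    ∃ c > (0 : ℝ), ∀ n : ℕ, 1 ≤ n → ∀ {C : Set (Dir d → ℝ)} (S : Set (Fin d → Bool)),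
      MeasurableSet C → ({t : ℝ | (n : ℝ) ≤ t⁻¹} ∩ Set.Ioc 0 (1 / 2)) ×ˢ S ⊆ psym d ⁻¹' C →
      ENNReal.ofReal (c * (n : ℝ) ^ (-(1 : ℝ) / 2 ^ d)) * uniformSigns d S
        ≤ Pr ((fun ω : Env d => ω 0) ⁻¹' (Subtype.val ⁻¹' C)) := by
  obtain ⟨-, μT, hμT, hsupp, ⟨c, hc, htail⟩, hmap⟩ := hPr
  refine ⟨c, hc, fun n hn C S hC hCS => ?_⟩
  have hmarg : Pr ((fun ω : Env d => ω 0) ⁻¹' (Subtype.val ⁻¹' C))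
      = μT.prod (uniformSigns d) (psym d ⁻¹' C) := by
    change Pr ((fun ω : Env d => (ω 0).1) ⁻¹' C) = _
    rw [← Measure.map_apply (f := fun ω : Env d => ((ω 0).1 : Dir d → ℝ))
      (measurable_subtype_coe.comp (measurable_pi_apply _)) hC, hmap,
      Measure.map_apply measurable_psym hC]
  have hconull : μT (Set.Ioc (0 : ℝ) (1 / 2))ᶜ = 0 := by
    rw [measure_compl measurableSet_Ioc (measure_ne_top _ _), measure_univ]
    exact tsub_eq_zero_of_le hsupp.ge
  calc ENNReal.ofReal (c * (n : ℝ) ^ (-(1 : ℝ) / 2 ^ d)) * uniformSigns d S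
      ≤ μT ({t : ℝ | (n : ℝ) ≤ t⁻¹} ∩ Set.Ioc 0 (1 / 2)) * uniformSigns d S := by
        rw [measure_inter_conull hconull]
        gcongr
        exact htail n hn
    _ = μT.prod (uniformSigns d) (({t : ℝ | (n : ℝ) ≤ t⁻¹} ∩ Set.Ioc 0 (1 / 2)) ×ˢ S) :=
        (Measure.prod_prod _ _).symm
    _ ≤ _ := hmarg ▸ measure_mono hCS

lemma IsPsym.exists_ofReal_inv_le_measure_cube_tail (hd : 0 < d) (hPr : IsPsym Pr) :
    ∃ c' > (0 : ℝ), ∀ n : ℕ, 1 ≤ n →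
      ENNReal.ofReal (c' * (n : ℝ)⁻¹) ≤ Pr {ω | ∀ x ∈ cube (0 : V d), (n : ℝ) ≤ (Tval ω x)⁻¹} := by
  obtain ⟨c, hc, htail⟩ := hPr.exists_tail_bound
  refine ⟨c ^ 2 ^ d, by positivity, fun n hn => ?_⟩
  have hsub :
      ({t : ℝ | (n : ℝ) ≤ t⁻¹} ∩ Set.Ioc 0 (1 / 2)) ×ˢ Set.univ ⊆ psym d ⁻¹' tailSet d n := by
    rintro ⟨t, σ⟩ ⟨⟨htn, -, ht⟩, -⟩
    change (n : ℝ) ≤ ((d : ℝ) * ⨅ e, psym d (t, σ) e)⁻¹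
    rwa [iInf_psym hd ht σ, mul_div_cancel₀ t (Nat.cast_ne_zero.mpr hd.ne')]
  rw [hPr.1.measure_cube_tail_eq_pow, ← mul_rpow_neg_inv_two_pow_pow c n.cast_nonneg,
    ENNReal.ofReal_pow (by positivity)]
  gcongr
  have h := htail n hn Set.univ (measurableSet_tailSet n) hsub
  rw [measure_univ, mul_one] at h
  exact h

def cubeLeakLE (d : ℕ) (q : ℝ) : Set (Env d) :=
  {ω | ∀ x ∈ cube (0 : V d), 1 - q ≤ ∑ e ∈ innerDirs (cube 0) x, pmf ω x e}

lemma cubeLeakLE_eq_biInter (q : ℝ) :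
    cubeLeakLE d q = ⋂ x ∈ cubePts d, (fun ω : Env d => ω x) ⁻¹'
      (Subtype.val ⁻¹' {v | 1 - q ≤ ∑ e ∈ innerDirs (cube 0) x, v e}) :=
  setOf_forall_cube_eq_biInter fun x v => 1 - q ≤ ∑ e ∈ innerDirs (cube 0) x, v e

lemma measurableSet_le_sum (s : Finset (Dir d)) (a : ℝ) :
    MeasurableSet {v : Dir d → ℝ | a ≤ ∑ e ∈ s, v e} :=
  measurableSet_le measurable_const (by fun_prop)

lemma measurableSet_cubeLeakLE (q : ℝ) : MeasurableSet (cubeLeakLE d q) := by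
  rw [cubeLeakLE_eq_biInter]
  exact Finset.measurableSet_biInter _ fun x _ =>
    measurable_pi_apply x (measurable_subtype_coe (measurableSet_le_sum _ _))

/-- Each corner is left with probability `T ≤ 1 / (m + 1)` when `B₀` points outwards there,
which has probability at least `c (m + 1)^{-1/2^d} 2^{-d}`; independence over the `2^d`
corners gives the harmonic lower bound. -/
lemma IsPsym.exists_le_measure_cubeLeakLE (hd : 0 < d) (hPr : IsPsym Pr) :
    ∃ a > (0 : ℝ), ∀ m : ℕ,
      ENNReal.ofReal (a * ((m : ℝ) + 1)⁻¹) * ((2 ^ d : ℝ≥0∞)⁻¹) ^ 2 ^ d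
        ≤ Pr (cubeLeakLE d ((m : ℝ) + 1)⁻¹) := by
  obtain ⟨c, hc, htail⟩ := hPr.exists_tail_bound
  refine ⟨c ^ 2 ^ d, by positivity, fun m => ?_⟩
  have hm : ((m + 1 : ℕ) : ℝ) = (m : ℝ) + 1 := by push_cast; ring
  have hcorner : ∀ x ∈ cubePts d,
      ENNReal.ofReal (c * ((m + 1 : ℕ) : ℝ) ^ (-(1 : ℝ) / 2 ^ d)) * (2 ^ d : ℝ≥0∞)⁻¹
        ≤ Pr ((fun ω : Env d => ω 0) ⁻¹'
            (Subtype.val ⁻¹' {v | 1 - ((m : ℝ) + 1)⁻¹ ≤ ∑ e ∈ innerDirs (cube 0) x, v e})) := by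
    intro x hx
    rw [← uniformSigns_singleton (outwardSigns x)]
    refine htail (m + 1) (by omega) _ (measurableSet_le_sum _ _) ?_
    rintro ⟨t, σ⟩ ⟨⟨htn, -⟩, rfl⟩
    have ht : t ≤ ((m : ℝ) + 1)⁻¹ := hm ▸ le_inv_of_le_inv₀ (by positivity) htn
    have hsum := sum_innerDirs_psym_outwardSigns hd (x := x) (by rwa [← coe_cubePts]) t
    simp only [Set.mem_preimage, Set.mem_ofPred_eq, hsum]
    linarith
  rw [cubeLeakLE_eq_biInter, hPr.1.measure_biInter_eval_preimage _
    fun x => measurable_subtype_coe (measurableSet_le_sum _ _)]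
  calc _ = ∏ _x ∈ cubePts d,
        ENNReal.ofReal (c * ((m + 1 : ℕ) : ℝ) ^ (-(1 : ℝ) / 2 ^ d)) * (2 ^ d : ℝ≥0∞)⁻¹ := by
        rw [Finset.prod_const, card_cubePts, mul_pow, ← ENNReal.ofReal_pow (by positivity),
          mul_rpow_neg_inv_two_pow_pow c (by positivity), hm]
    _ ≤ _ := Finset.prod_le_prod' hcorner

lemma IsPsym.lintegral_exitTime_cube_eq_top {P : Env d → V d → Measure (Traj d)} (hd : 0 < d)
    (hP : IsQuenched P) (hPr : IsPsym Pr) :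
    ∫⁻ X, (exitTime (cube 0) X : ℝ≥0∞) ∂(annealed P Pr 0) = ⊤ := by
  obtain ⟨a, ha, hleak⟩ := hPr.exists_le_measure_cubeLeakLE hd
  have hstay : ∀ m : ℕ, ∀ ω ∈ cubeLeakLE d ((m : ℝ) + 1)⁻¹,
      (m : ℝ≥0∞) + 1 ≤ ∑' n, P ω 0 (stays (cube 0) n) := by
    intro m ω hω
    have := hP.inv_le_tsum_measure_stays ω (by positivity) (inv_le_one_of_one_le₀ (by simp)) hω
      (mem_cube_zero.mpr fun _ => Or.inl rfl)
    rwa [ENNReal.ofReal_inv_of_pos (by positivity), inv_inv,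
      ENNReal.ofReal_add (by simp) zero_le_one, ENNReal.ofReal_natCast, ENNReal.ofReal_one] at this
  refine top_le_iff.mp (le_trans ?_ (tsum_measure_le_lintegral_exitTime hP Pr 0
    (fun m => measurableSet_cubeLeakLE _) hstay))
  calc ⊤ = ∑' m : ℕ, ENNReal.ofReal (a * ((m : ℝ) + 1)⁻¹) * ((2 ^ d : ℝ≥0∞)⁻¹) ^ 2 ^ d := by
        rw [ENNReal.tsum_mul_right, tsum_ofReal_mul_inv_succ_eq_top ha, ENNReal.top_mul (by simp)]
    _ ≤ _ := ENNReal.tsum_le_tsum hleak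

end SymmetricExample

/-- For the symmetric example environment on `ℤ^d`, `d ≥ 2`:
`𝐏[min_{x∈𝔥} 1/T^{(x)} ≥ n] = 𝐏[T⁻¹ ≥ n]^{2^d} ≥ c' n⁻¹`, and the annealed expected exit
time of the unit hypercube is infinite. -/
theorem psym_infinite_cube_exit_time
    (d : ℕ) (hd : 2 ≤ d)
    (P : Env d → V d → Measure (Traj d)) (hP : IsQuenched P)
    (Pr : Measure (Env d)) (hPr : IsPsym Pr) :
    (∀ n : ℕ, 1 ≤ n →
      Pr {ω | ∀ x ∈ cube (0 : V d), (n : ℝ) ≤ (Tval ω x)⁻¹}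
        = (Pr {ω | (n : ℝ) ≤ (Tval ω 0)⁻¹}) ^ (2 ^ d)) ∧
    (∃ c' > (0 : ℝ), ∀ n : ℕ, 1 ≤ n →
      ENNReal.ofReal (c' * (n : ℝ)⁻¹)
        ≤ Pr {ω | ∀ x ∈ cube (0 : V d), (n : ℝ) ≤ (Tval ω x)⁻¹}) ∧
    ∫⁻ X, ((exitTime (cube 0) X : ℝ≥0∞)) ∂(annealed P Pr 0) = ⊤ := by
  have hd0 : 0 < d := by omega
  exact ⟨fun n _ => hPr.1.measure_cube_tail_eq_pow n,
    hPr.exists_ofReal_inv_le_measure_cube_tail hd0,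
    hPr.lintegral_exitTime_cube_eq_top hd0 hP⟩

end RWRE
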